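/- arXiv:2408.09581 — 12 statements merged into one kernel-verified Lean document; each statement's English description precedes it below -/
import Mathlib

section
/- Let (A,f,g) be a PS-algebra and let F be a filter of A. Then F is a congruence filter (i.e., the Boolean congruence θ_F is compatible with both f^∂ and g*) if and only if u(a,⊥) ⊓ u(⊥,a) ∈ F for every a ∈ F. -/
/-- A binary possibility operator on a Boolean algebra. -/
def IsPossibilityOp {A : Type*} [BooleanAlgebra A] (f : A → A → A) : Prop :=
  (∀ a, f a ⊥ = ⊥) ∧ (∀ a, f ⊥ a = ⊥) ∧
  (∀ a b b', f a b ⊔ f a b' = f a (b ⊔ b')) ∧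
  (∀ a a' b, f a b ⊔ f a' b = f (a ⊔ a') b)

/-- A binary sufficiency operator on a Boolean algebra. -/
def IsSufficiencyOp {A : Type*} [BooleanAlgebra A] (g : A → A → A) : Prop :=
  (∀ a, g a ⊥ = ⊤) ∧ (∀ a, g ⊥ a = ⊤) ∧
  (∀ a b b', g a b ⊓ g a b' = g a (b ⊔ b')) ∧
  (∀ a a' b, g a b ⊓ g a' b = g (a ⊔ a') b)

/-- The dual `f^∂(a,b) = -f(-a,-b)` of a possibility operator. -/
def fdual {A : Type*} [BooleanAlgebra A] (f : A → A → A) (a b : A) : A := (f aᶜ bᶜ)ᶜ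

/-- The operator `g*(a,b) = g(-a,-b)`. -/
def gstar {A : Type*} [BooleanAlgebra A] (g : A → A → A) (a b : A) : A := g aᶜ bᶜ

/-- The auxiliary operator `u(a,b) = f^∂(a,b) ⊓ g*(a,b)`. -/
def uop {A : Type*} [BooleanAlgebra A] (f g : A → A → A) (a b : A) : A :=
  fdual f a b ⊓ gstar g a b

/-- A filter on a Boolean algebra: nonempty, upward closed, closed under meets. -/
def IsFilter' {A : Type*} [BooleanAlgebra A] (F : Set A) : Prop :=
  F.Nonempty ∧ (∀ a ∈ F, ∀ b, a ≤ b → b ∈ F) ∧ (∀ a ∈ F, ∀ b ∈ F, a ⊓ b ∈ F)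

/-- The symmetric sum `a∇b = (a ⊓ b) ⊔ (-a ⊓ -b)`. -/
def nabla {A : Type*} [BooleanAlgebra A] (a b : A) : A := a ⊓ b ⊔ aᶜ ⊓ bᶜ

/-- The Boolean congruence `θ_F` induced by a filter `F`. -/
def theta {A : Type*} [BooleanAlgebra A] (F : Set A) (a b : A) : Prop := nabla a b ∈ F

/-- A congruence filter: a filter whose congruence is compatible with `f^∂` and `g*`. -/
def IsCongruenceFilter {A : Type*} [BooleanAlgebra A] (f g : A → A → A) (F : Set A) : Prop :=
  IsFilter' F ∧
  ∀ a a' b b', theta F a a' → theta F b b' →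
    theta F (fdual f a b) (fdual f a' b') ∧ theta F (gstar g a b) (gstar g a' b')

section Aux

variable {A : Type*} [BooleanAlgebra A]

lemma nabla_comm' (a b : A) : nabla a b = nabla b a := by
  simp [nabla, inf_comm]

lemma inf_nabla_le' (a a' : A) : a ⊓ nabla a a' ≤ a' := by
  rw [nabla, inf_sup_left]
  apply sup_le
  · exact le_trans inf_le_right inf_le_right
  · calc a ⊓ (aᶜ ⊓ a'ᶜ) ≤ a ⊓ aᶜ := inf_le_inf_left _ inf_le_left
      _ = ⊥ := inf_compl_eq_bot
      _ ≤ a' := bot_le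

lemma le_nabla_of' (e x y : A) (h1 : e ⊓ x ≤ y) (h2 : e ⊓ y ≤ x) : e ≤ nabla x y := by
  have hxc : e ⊓ xᶜ ≤ yᶜ := by
    rw [le_compl_iff_disjoint_right, disjoint_iff_inf_le]
    calc e ⊓ xᶜ ⊓ y = (e ⊓ y) ⊓ xᶜ := by ac_rfl
      _ ≤ x ⊓ xᶜ := inf_le_inf_right _ h2
      _ = ⊥ := inf_compl_eq_bot
  calc e = e ⊓ x ⊔ e ⊓ xᶜ := sup_inf_inf_compl.symm
    _ ≤ x ⊓ y ⊔ xᶜ ⊓ yᶜ :=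
        sup_le_sup (le_inf inf_le_right h1) (le_inf inf_le_right hxc)

/-- Key lemma for an operator preserving binary meets in each coordinate. -/
lemma key_le {h : A → A → A}
    (hml : ∀ x y z, h (x ⊓ y) z = h x z ⊓ h y z)
    (hmr : ∀ x y z, h x (y ⊓ z) = h x y ⊓ h x z)
    (a a' b b' : A) :
    h (nabla a a') ⊥ ⊓ h ⊥ (nabla b b') ⊓ h a b ≤ h a' b' := by
  have mono1 : ∀ x y z : A, x ≤ y → h x z ≤ h y z := by
    intro x y z hxy
    have : h x z = h x z ⊓ h y z := by rw [← hml, inf_eq_left.mpr hxy]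
    rw [this]; exact inf_le_right
  have mono2 : ∀ x y z : A, y ≤ z → h x y ≤ h x z := by
    intro x y z hyz
    have : h x y = h x z ⊓ h x y := by rw [← hmr, inf_eq_right.mpr hyz]
    rw [this]; exact inf_le_left
  set c := nabla a a'
  set d := nabla b b'
  have key : h (a ⊓ c) (b ⊓ d) = h a b ⊓ h a d ⊓ (h c b ⊓ h c d) := by
    rw [hml, hmr, hmr]
  have h1 : h c ⊥ ⊓ h ⊥ d ⊓ h a b ≤ h (a ⊓ c) (b ⊓ d) := by
    rw [key]
    refine le_inf (le_inf inf_le_right ?_) (le_inf ?_ ?_)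
    · exact le_trans (le_trans inf_le_left inf_le_right) (mono1 ⊥ a d bot_le)
    · exact le_trans (le_trans inf_le_left inf_le_left) (mono2 c ⊥ b bot_le)
    · exact le_trans (le_trans inf_le_left inf_le_left) (mono2 c ⊥ d bot_le)
  refine le_trans h1 (le_trans (mono1 _ _ _ (inf_nabla_le' a a')) (mono2 _ _ _ (inf_nabla_le' b b')))

lemma le_nabla_h {h : A → A → A}
    (hml : ∀ x y z, h (x ⊓ y) z = h x z ⊓ h y z)
    (hmr : ∀ x y z, h x (y ⊓ z) = h x y ⊓ h x z)
    (a a' b b' : A) :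
    h (nabla a a') ⊥ ⊓ h ⊥ (nabla b b') ≤ nabla (h a b) (h a' b') := by
  apply le_nabla_of'
  · exact key_le hml hmr a a' b b'
  · have := key_le hml hmr a' a b' b
    rwa [nabla_comm' a' a, nabla_comm' b' b] at this

end Aux

/-- Theorem: for a PS-algebra `(A,f,g)` and a filter `F`, `F` is a congruence filter
(i.e. `θ_F` is compatible with `f^∂` and `g*`) iff `u(a,⊥) ⊓ u(⊥,a) ∈ F` for all `a ∈ F`. -/
theorem congruence_filter_iff_u {A : Type*} [BooleanAlgebra A] [Nontrivial A]
    (f g : A → A → A) (hf : IsPossibilityOp f) (hg : IsSufficiencyOp g)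
    (F : Set A) (hF : IsFilter' F) :
    (∀ a a' b b', theta F a a' → theta F b b' →
        theta F (fdual f a b) (fdual f a' b') ∧ theta F (gstar g a b) (gstar g a' b')) ↔
    (∀ a ∈ F, uop f g a ⊥ ⊓ uop f g ⊥ a ∈ F) := by
  obtain ⟨⟨w, hw⟩, hup, hmeet⟩ := hF
  have htop : (⊤ : A) ∈ F := hup w hw ⊤ le_top
  -- meet-preservation of fdual and gstar
  have fml : ∀ x y z : A, fdual f (x ⊓ y) z = fdual f x z ⊓ fdual f y z := by
    intro x y z; simp only [fdual, compl_inf, ← hf.2.2.2, compl_sup]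
  have fmr : ∀ x y z : A, fdual f x (y ⊓ z) = fdual f x y ⊓ fdual f x z := by
    intro x y z; simp only [fdual, compl_inf, ← hf.2.2.1, compl_sup]
  have gml : ∀ x y z : A, gstar g (x ⊓ y) z = gstar g x z ⊓ gstar g y z := by
    intro x y z; simp only [gstar, compl_inf, ← hg.2.2.2]
  have gmr : ∀ x y z : A, gstar g x (y ⊓ z) = gstar g x y ⊓ gstar g x z := by
    intro x y z; simp only [gstar, compl_inf, ← hg.2.2.1]
  constructor
  · -- Forward
    intro hcomp a ha
    have hth : theta F a ⊤ := by
      have : nabla a ⊤ = a := by simp [nabla]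
      simpa [theta, this] using ha
    have hrefl : theta F (⊥ : A) ⊥ := by
      have : nabla (⊥ : A) ⊥ = ⊤ := by simp [nabla]
      simpa [theta, this] using htop
    have h1 := hcomp a ⊤ ⊥ ⊥ hth hrefl
    have h2 := hcomp ⊥ ⊥ a ⊤ hrefl hth
    have e1 : fdual f ⊤ ⊥ = ⊤ := by simp [fdual, hf.2.1]
    have e2 : gstar g ⊤ ⊥ = ⊤ := by simp [gstar, hg.2.1]
    have e3 : fdual f ⊥ ⊤ = ⊤ := by simp [fdual, hf.1]
    have e4 : gstar g ⊥ ⊤ = ⊤ := by simp [gstar, hg.1]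
    have mem1 : fdual f a ⊥ ∈ F := by
      have := h1.1; rw [theta, e1] at this
      have hn : nabla (fdual f a ⊥) ⊤ = fdual f a ⊥ := by simp [nabla]
      rwa [hn] at this
    have mem2 : gstar g a ⊥ ∈ F := by
      have := h1.2; rw [theta, e2] at this
      have hn : nabla (gstar g a ⊥) ⊤ = gstar g a ⊥ := by simp [nabla]
      rwa [hn] at this
    have mem3 : fdual f ⊥ a ∈ F := by
      have := h2.1; rw [theta, e3] at this
      have hn : nabla (fdual f ⊥ a) ⊤ = fdual f ⊥ a := by simp [nabla]
      rwa [hn] at this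
    have mem4 : gstar g ⊥ a ∈ F := by
      have := h2.2; rw [theta, e4] at this
      have hn : nabla (gstar g ⊥ a) ⊤ = gstar g ⊥ a := by simp [nabla]
      rwa [hn] at this
    exact hmeet _ (hmeet _ mem1 _ mem2) _ (hmeet _ mem3 _ mem4)
  · -- Backward
    intro hu a a' b b' hth1 hth2
    set c := nabla a a' with hc
    set d := nabla b b' with hd
    have hcF : c ∈ F := hth1
    have hdF : d ∈ F := hth2
    have huc := hu c hcF
    have hud := hu d hdF
    have hm : uop f g c ⊥ ⊓ uop f g ⊥ c ⊓ (uop f g d ⊥ ⊓ uop f g ⊥ d) ∈ F :=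
      hmeet _ huc _ hud
    constructor
    · refine hup _ hm _ (le_trans ?_ (le_nabla_h fml fmr a a' b b'))
      refine le_inf ?_ ?_
      · exact le_trans (le_trans inf_le_left inf_le_left) inf_le_left
      · exact le_trans (le_trans inf_le_right inf_le_right) inf_le_left
    · refine hup _ hm _ (le_trans ?_ (le_nabla_h gml gmr a a' b b'))
      refine le_inf ?_ ?_
      · exact le_trans (le_trans inf_le_left inf_le_left) inf_le_right
      · exact le_trans (le_trans inf_le_right inf_le_right) inf_le_right
end

section
/- Let (A,f,g) be a PS-algebra and define h(a,b) := f(a,b) ⊔ -g(a,b). For all ultrafilters U₁, U₂, U₃ of A: (h(a,b) ∈ U₂ for all a ∈ U₁, b ∈ U₃) if and only if (R_f(U₁,U₂,U₃) or not S_g(U₁,U₂,U₃)). That is, T_h = R_f ∪ -S_g. -/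
/-- An ultrafilter of a Boolean algebra (as a set). -/
def IsUltra {A : Type*} [BooleanAlgebra A] (U : Set A) : Prop :=
  ⊤ ∈ U ∧ ⊥ ∉ U ∧ (∀ a ∈ U, ∀ b ∈ U, a ⊓ b ∈ U) ∧
  (∀ a ∈ U, ∀ b, a ≤ b → b ∈ U) ∧ (∀ a, a ∈ U ∨ aᶜ ∈ U)

/-- The canonical relation `R_f`. -/
def Rrel {A : Type*} [BooleanAlgebra A] (f : A → A → A) (U₁ U₂ U₃ : Set A) : Prop :=
  ∀ a ∈ U₁, ∀ b ∈ U₃, f a b ∈ U₂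

/-- The canonical relation `S_g`. -/
def Srel {A : Type*} [BooleanAlgebra A] (g : A → A → A) (U₁ U₂ U₃ : Set A) : Prop :=
  ∃ a ∈ U₁, ∃ b ∈ U₃, g a b ∈ U₂

/-- Theorem (Lemma: `T_h = R_f ∪ -S_g`): with `h(a,b) := f(a,b) ⊔ -g(a,b)`, for all
ultrafilters `U₁,U₂,U₃`: `h[U₁ × U₃] ⊆ U₂` iff `R_f(U₁,U₂,U₃)` or not `S_g(U₁,U₂,U₃)`. -/
theorem Th_eq_Rf_union_compl_Sg {A : Type*} [BooleanAlgebra A] [Nontrivial A]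
    (f g : A → A → A) (hf : IsPossibilityOp f) (hg : IsSufficiencyOp g)
    (U₁ U₂ U₃ : Set A) (h₁ : IsUltra U₁) (h₂ : IsUltra U₂) (h₃ : IsUltra U₃) :
    (∀ a ∈ U₁, ∀ b ∈ U₃, f a b ⊔ (g a b)ᶜ ∈ U₂) ↔
      (Rrel f U₁ U₂ U₃ ∨ ¬ Srel g U₁ U₂ U₃) := by
  obtain ⟨htop, hbot, hinf, hup, hcomp⟩ := h₂
  constructor
  · intro H
    by_cases hR : Rrel f U₁ U₂ U₃
    · exact Or.inl hR
    right
    rintro ⟨a₁, ha₁, b₁, hb₁, hgU⟩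
    simp only [Rrel, not_forall] at hR
    obtain ⟨a₀, ha₀, b₀, hb₀, hfU⟩ := hR
    set a := a₀ ⊓ a₁ with hadef
    set b := b₀ ⊓ b₁ with hbdef
    have haU : a ∈ U₁ := h₁.2.2.1 _ ha₀ _ ha₁
    have hbU : b ∈ U₃ := h₃.2.2.1 _ hb₀ _ hb₁
    have fmono1 : ∀ x y c : A, x ≤ y → f x c ≤ f y c := by
      intro x y c hxy
      calc f x c ≤ f x c ⊔ f y c := le_sup_left
        _ = f (x ⊔ y) c := hf.2.2.2 x y c
        _ = f y c := by rw [sup_eq_right.mpr hxy]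
    have fmono2 : ∀ c x y : A, x ≤ y → f c x ≤ f c y := by
      intro c x y hxy
      calc f c x ≤ f c x ⊔ f c y := le_sup_left
        _ = f c (x ⊔ y) := hf.2.2.1 c x y
        _ = f c y := by rw [sup_eq_right.mpr hxy]
    have ganti1 : ∀ x y c : A, x ≤ y → g y c ≤ g x c := by
      intro x y c hxy
      calc g y c = g (x ⊔ y) c := by rw [sup_eq_right.mpr hxy]
        _ = g x c ⊓ g y c := (hg.2.2.2 x y c).symm
        _ ≤ g x c := inf_le_left
    have ganti2 : ∀ c x y : A, x ≤ y → g c y ≤ g c x := by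
      intro c x y hxy
      calc g c y = g c (x ⊔ y) := by rw [sup_eq_right.mpr hxy]
        _ = g c x ⊓ g c y := (hg.2.2.1 c x y).symm
        _ ≤ g c x := inf_le_left
    have hfab : f a b ∉ U₂ := by
      intro hmem
      exact hfU (hup _ hmem _ (le_trans (fmono1 a a₀ b inf_le_left)
        (fmono2 a₀ b b₀ inf_le_left)))
    have hgab : g a b ∈ U₂ :=
      hup _ hgU _ (le_trans (ganti1 a a₁ b₁ inf_le_right) (ganti2 a b b₁ inf_le_right))
    have hsup := H a haU b hbU
    have hcn : (g a b)ᶜ ∉ U₂ := by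
      intro hc
      exact hbot (hup _ (hinf _ hgab _ hc) _ (le_of_eq inf_compl_eq_bot))
    rcases hcomp (f a b) with hfin | hfc
    · exact hfab hfin
    refine hcn (hup _ (hinf _ hsup _ hfc) _ ?_)
    rw [inf_sup_right]
    simp
  · rintro (hR | hS) a ha b hb
    · exact hup _ (hR a ha b hb) _ le_sup_left
    · have hng : g a b ∉ U₂ := fun h => hS ⟨a, ha, b, hb, h⟩
      rcases hcomp (g a b) with h | h
      · exact absurd h hng
      · exact hup _ h _ le_sup_right
end

section
/- The canonical frame of a weak MIA is a wMIA frame: if (A,f,g) is a weak MIA, then for all ultrafilters U₁, U₂, U₃ of A, S_g(U₁,U₂,U₃) implies R_f(U₁,U₂,U₃); that is, S_g ⊆ R_f. -/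
/-- Theorem: the canonical frame of a weak MIA is a wMIA frame: if `(A,f,g)` is a weak MIA,
then for all ultrafilters `U₁,U₂,U₃`, `S_g(U₁,U₂,U₃)` implies `R_f(U₁,U₂,U₃)`. -/
theorem canonical_frame_of_wMIA {A : Type*} [BooleanAlgebra A] [Nontrivial A]
    (f g : A → A → A) (hf : IsPossibilityOp f) (hg : IsSufficiencyOp g)
    (hw : ∀ a b : A, a ≠ ⊥ → b ≠ ⊥ → g a b ≤ f a b)
    (U₁ U₂ U₃ : Set A) (h₁ : IsUltra U₁) (h₂ : IsUltra U₂) (h₃ : IsUltra U₃) :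
    Srel g U₁ U₂ U₃ → Rrel f U₁ U₂ U₃ := by
  rintro ⟨a₀, ha₀, b₀, hb₀, hg₂⟩ a ha b hb
  obtain ⟨-, -, hfj1, hfj2⟩ := hf
  obtain ⟨-, -, hgj1, hgj2⟩ := hg
  -- monotonicity helpers
  have fmono1 : ∀ x y b : A, x ≤ y → f x b ≤ f y b := by
    intro x y c hxy
    have h := hfj2 x y c
    rw [sup_eq_right.mpr hxy] at h
    exact h ▸ le_sup_left
  have fmono2 : ∀ a x y : A, x ≤ y → f a x ≤ f a y := by
    intro c x y hxy
    have h := hfj1 c x y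
    rw [sup_eq_right.mpr hxy] at h
    exact h ▸ le_sup_left
  have ganti1 : ∀ x y b : A, x ≤ y → g y b ≤ g x b := by
    intro x y c hxy
    have h := hgj2 x y c
    rw [sup_eq_right.mpr hxy] at h
    exact h ▸ inf_le_left
  have ganti2 : ∀ a x y : A, x ≤ y → g a y ≤ g a x := by
    intro c x y hxy
    have h := hgj1 c x y
    rw [sup_eq_right.mpr hxy] at h
    exact h ▸ inf_le_left
  obtain ⟨-, hU1bot, hU1inf, -, -⟩ := h₁
  obtain ⟨-, -, -, hU2up, -⟩ := h₂
  obtain ⟨-, hU3bot, hU3inf, -, -⟩ := h₃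
  have haa : a ⊓ a₀ ∈ U₁ := hU1inf a ha a₀ ha₀
  have hbb : b ⊓ b₀ ∈ U₃ := hU3inf b hb b₀ hb₀
  have haa0 : a ⊓ a₀ ≠ ⊥ := fun h => hU1bot (h ▸ haa)
  have hbb0 : b ⊓ b₀ ≠ ⊥ := fun h => hU3bot (h ▸ hbb)
  have key : g a₀ b₀ ≤ f a b :=
    le_trans (ganti1 (a ⊓ a₀) a₀ b₀ inf_le_right)
      (le_trans (ganti2 (a ⊓ a₀) (b ⊓ b₀) b₀ inf_le_right)
        (le_trans (hw _ _ haa0 hbb0)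
          (le_trans (fmono1 (a ⊓ a₀) a (b ⊓ b₀) inf_le_left)
            (fmono2 a (b ⊓ b₀) b inf_le_left))))
  exact hU2up _ hg₂ _ key
end

section
/- If (W,R,S) is a wMIA frame, then R̄ = S̄; equivalently, R̄ and the set m((W³∖R)₁) ∪ ((R₁ ∪ R₂) ∖ (S₁ ∪ S₂)) are complementary subsets of W̄³. -/
/-- The projection `j : W ⊕ W → W` sending each element of either copy to the original. -/
def jmap {W : Type*} : W ⊕ W → W := Sum.elim id id

/-- The cell `c(x,y,z)` of all triples over `W ⊕ W` projecting to `(x,y,z)`. -/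
def cell {W : Type*} (x y z : W) : Set ((W ⊕ W) × (W ⊕ W) × (W ⊕ W)) :=
  {p | jmap p.1 = x ∧ jmap p.2.1 = y ∧ jmap p.2.2 = z}

/-- The mixture `m(P̄)` of a relation `P̄` on `W ⊕ W`. -/
def mix {W : Type*} (P : Set ((W ⊕ W) × (W ⊕ W) × (W ⊕ W))) :
    Set ((W ⊕ W) × (W ⊕ W) × (W ⊕ W)) :=
  ⋃ p ∈ P, cell (jmap p.1) (jmap p.2.1) (jmap p.2.2)

/-- The first (left) copy `P₁` of a ternary relation `P` on `W`. -/
def inj1 {W : Type*} (P : Set (W × W × W)) : Set ((W ⊕ W) × (W ⊕ W) × (W ⊕ W)) :=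
  (fun p => (Sum.inl p.1, Sum.inl p.2.1, Sum.inl p.2.2)) '' P

/-- The second (right) copy `P₂` of a ternary relation `P` on `W`. -/
def inj2 {W : Type*} (P : Set (W × W × W)) : Set ((W ⊕ W) × (W ⊕ W) × (W ⊕ W)) :=
  (fun p => (Sum.inr p.1, Sum.inr p.2.1, Sum.inr p.2.2)) '' P

/-- The relation `R̄` of the special frame obtained from a wMIA frame `(W,R,S)`. -/
def Rbar {W : Type*} (R S : Set (W × W × W)) : Set ((W ⊕ W) × (W ⊕ W) × (W ⊕ W)) :=
  mix (inj1 S) ∪ (mix (inj1 (R \ S)) \ (inj1 R ∪ inj2 R))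


lemma mem_mix_inj1 {W : Type*} (P : Set (W × W × W)) (p : (W ⊕ W) × (W ⊕ W) × (W ⊕ W)) :
    p ∈ mix (inj1 P) ↔ (jmap p.1, jmap p.2.1, jmap p.2.2) ∈ P := by
  simp only [mix, Set.mem_iUnion, exists_prop]
  constructor
  · rintro ⟨q, ⟨⟨x, y, z⟩, hxyz, rfl⟩, h1, h2, h3⟩
    simp only [cell, jmap, Set.mem_setOf_eq, Sum.elim_inl, id] at h1 h2 h3 ⊢
    rw [← h1, ← h2, ← h3] at hxyz; exact hxyz
  · intro h
    exact ⟨(Sum.inl (jmap p.1), Sum.inl (jmap p.2.1), Sum.inl (jmap p.2.2)),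
      ⟨_, h, rfl⟩, by simp [cell, jmap]⟩

lemma mem_inj1_iff {W : Type*} (P : Set (W × W × W)) (a b c : W ⊕ W) :
    (a, b, c) ∈ inj1 P ↔ ∃ x, a = Sum.inl x ∧ ∃ y, b = Sum.inl y ∧ ∃ z, c = Sum.inl z ∧ (x, y, z) ∈ P := by
  constructor
  · rintro ⟨⟨x, y, z⟩, h, heq⟩
    simp only at heq
    injection heq with h1 h23
    injection h23 with h2 h3
    exact ⟨x, h1.symm, y, h2.symm, z, h3.symm, h⟩
  · rintro ⟨x, rfl, y, rfl, z, rfl, h⟩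
    exact ⟨(x, y, z), h, rfl⟩

lemma mem_inj2_iff {W : Type*} (P : Set (W × W × W)) (a b c : W ⊕ W) :
    (a, b, c) ∈ inj2 P ↔ ∃ x, a = Sum.inr x ∧ ∃ y, b = Sum.inr y ∧ ∃ z, c = Sum.inr z ∧ (x, y, z) ∈ P := by
  constructor
  · rintro ⟨⟨x, y, z⟩, h, heq⟩
    simp only at heq
    injection heq with h1 h23
    injection h23 with h2 h3
    exact ⟨x, h1.symm, y, h2.symm, z, h3.symm, h⟩
  · rintro ⟨x, rfl, y, rfl, z, rfl, h⟩
    exact ⟨(x, y, z), h, rfl⟩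

/-- Theorem: if `(W,R,S)` is a wMIA frame, then `R̄ = S̄`, where
`S̄ = W̄³ ∖ (m((W³∖R)₁) ∪ ((R₁ ∪ R₂) ∖ (S₁ ∪ S₂)))`. -/
theorem Rbar_eq_Sbar {W : Type*} (R S : Set (W × W × W)) (hSR : S ⊆ R) :
    Rbar R S =
      Set.univ \ (mix (inj1 (Set.univ \ R)) ∪ ((inj1 R ∪ inj2 R) \ (inj1 S ∪ inj2 S))) := by
  ext ⟨a, b, c⟩
  obtain (x|x) := a <;> obtain (y|y) := b <;> obtain (z|z) := c <;>
  · have h := @hSR (x, y, z)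
    simp only [Rbar, Set.mem_union, Set.mem_diff, Set.mem_univ, true_and, mem_mix_inj1]
    simp [mem_inj1_iff, mem_inj2_iff, Set.mem_diff]
    tauto
end

section
/- Possibility step of the modal-equivalence theorem: let (W,R,S) be a wMIA frame, and for X ⊆ W let X̄ := X₁ ∪ X₂ denote the union of its two copies in W̄. Then for all X, Y ⊆ W and all s ∈ W̄: there exist r ∈ X̄ and t ∈ Ȳ with (r,s,t) ∈ R̄ if and only if there exist x ∈ X and y ∈ Y with (x, j(s), y) ∈ R. -/
/-- The union `X̄ = X₁ ∪ X₂` of the two copies of `X ⊆ W` in `W ⊕ W`. -/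
def dbl {W : Type*} (X : Set W) : Set (W ⊕ W) := Sum.inl '' X ∪ Sum.inr '' X

/-- Possibility step of the modal-equivalence theorem. -/
theorem possibility_step {W : Type*} (R S : Set (W × W × W)) (hSR : S ⊆ R)
    (X Y : Set W) (s : W ⊕ W) :
    (∃ r ∈ dbl X, ∃ t ∈ dbl Y, (r, s, t) ∈ Rbar R S) ↔
      (∃ x ∈ X, ∃ y ∈ Y, (x, jmap s, y) ∈ R) := by
  have hmix : ∀ (P : Set (W × W × W)) (q : (W ⊕ W) × (W ⊕ W) × (W ⊕ W)),
      q ∈ mix (inj1 P) ↔ (jmap q.1, jmap q.2.1, jmap q.2.2) ∈ P := by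
    intro P q
    constructor
    · rintro h
      simp only [mix, Set.mem_iUnion] at h
      obtain ⟨p, ⟨⟨a, b, c⟩, hp, rfl⟩, h1, h2, h3⟩ := h
      simp only [jmap, Sum.elim_inl, id] at h1 h2 h3
      simp only [jmap]; rw [h1, h2, h3]; exact hp
    · intro h
      simp only [mix, Set.mem_iUnion]
      refine ⟨_, ⟨_, h, rfl⟩, ?_⟩
      simp [cell, jmap]
  have hdbl : ∀ (Z : Set W) (r : W ⊕ W), r ∈ dbl Z ↔ jmap r ∈ Z := by
    intro Z r
    cases r <;> simp [dbl, jmap]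
  constructor
  · rintro ⟨r, hr, t, ht, hR⟩
    refine ⟨jmap r, (hdbl X r).1 hr, jmap t, (hdbl Y t).1 ht, ?_⟩
    rcases hR with h | ⟨h, -⟩
    · exact hSR ((hmix S _).1 h)
    · exact ((hmix (R \ S) _).1 h).1
  · rintro ⟨x, hx, y, hy, hR⟩
    by_cases hS : (x, jmap s, y) ∈ S
    · refine ⟨Sum.inl x, (hdbl X _).2 (by simpa [jmap] using hx),
        Sum.inl y, (hdbl Y _).2 (by simpa [jmap] using hy), Or.inl ?_⟩
      rw [hmix]; simpa [jmap] using hS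
    · refine ⟨Sum.inl x, (hdbl X _).2 (by simpa [jmap] using hx),
        Sum.inr y, (hdbl Y _).2 (by simpa [jmap] using hy), Or.inr ⟨?_, ?_⟩⟩
      · rw [hmix]; simpa [jmap] using ⟨hR, hS⟩
      · rintro (⟨⟨a, b, c⟩, -, h⟩ | ⟨⟨a, b, c⟩, -, h⟩) <;> simp at h
end

section
/- Let (A,f,g) be a PS-algebra satisfying condition (di). Then for all a ∈ A: u(a,a) = u(a,⊥) = u(⊥,a); moreover this common value equals ⊤ if a = ⊤ and equals ⊥ otherwise. -/
/-- Theorem: in a PS-algebra satisfying condition (di), `u(a,a) = u(a,⊥) = u(⊥,a)`,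
and this common value is `⊤` if `a = ⊤` and `⊥` otherwise. -/
theorem u_eq_of_di {A : Type*} [BooleanAlgebra A] [Nontrivial A]
    (f g : A → A → A) (hf : IsPossibilityOp f) (hg : IsSufficiencyOp g)
    (hdi : ∀ a b : A, a ⊓ b ≠ ⊥ → g a b ≤ f a b) :
    ∀ a : A, uop f g a a = uop f g a ⊥ ∧ uop f g a ⊥ = uop f g ⊥ a ∧
      (a = ⊤ → uop f g a ⊥ = ⊤) ∧ (a ≠ ⊤ → uop f g a ⊥ = ⊥) := by
  have h0 : ∀ x y : A, xᶜ ⊓ yᶜ ≠ ⊥ → uop f g x y = ⊥ := by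
    intro x y h
    have hle := hdi _ _ h
    have : uop f g x y ≤ (f xᶜ yᶜ)ᶜ ⊓ f xᶜ yᶜ :=
      inf_le_inf_left _ hle
    simpa [uop, fdual, gstar, le_bot_iff] using this.trans_eq (compl_inf_self _)
  intro a
  by_cases ha : a = ⊤
  · subst ha
    simp [uop, fdual, gstar, hf.1, hf.2.1, hg.1, hg.2.1]
  · have hA : aᶜ ≠ ⊥ := by simpa [compl_eq_bot] using ha
    have h1 : uop f g a a = ⊥ := h0 a a (by simpa using hA)
    have h2 : uop f g a ⊥ = ⊥ := h0 a ⊥ (by simpa using hA)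
    have h3 : uop f g ⊥ a = ⊥ := h0 ⊥ a (by simpa using hA)
    exact ⟨h1.trans h2.symm, h2.trans h3.symm, fun h => absurd h ha, fun _ => h2⟩
end

section
/- Let (A,f,g) be a weak MIA. Then A satisfies u(a,b) = u(a,⊥) ⊔ u(⊥,b) for all a, b, and the range of u is {⊥, ⊤}: for all a, b, u(a,b) = ⊥ or u(a,b) = ⊤. -/
/-- Theorem: a weak MIA satisfies `u(a,b) = u(a,⊥) ⊔ u(⊥,b)`, and the range of `u`
is `{⊥, ⊤}`. -/
theorem u_additive_of_wMIA {A : Type*} [BooleanAlgebra A] [Nontrivial A]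
    (f g : A → A → A) (hf : IsPossibilityOp f) (hg : IsSufficiencyOp g)
    (hw : ∀ a b : A, a ≠ ⊥ → b ≠ ⊥ → g a b ≤ f a b) :
    ∀ a b : A, uop f g a b = uop f g a ⊥ ⊔ uop f g ⊥ b ∧
      (uop f g a b = ⊥ ∨ uop f g a b = ⊤) :=
  by
  classical
  obtain ⟨hf1, hf2, _, _⟩ := hf
  obtain ⟨hg1, hg2, _, _⟩ := hg
  have key : ∀ a b : A, uop f g a b = if a = ⊤ ∨ b = ⊤ then ⊤ else ⊥ := by
    intro a b
    by_cases ha : a = ⊤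
    · simp [ha, uop, fdual, gstar, hf2, hg2]
    · by_cases hb : b = ⊤
      · simp [hb, uop, fdual, gstar, hf1, hg1]
      · have ha' : aᶜ ≠ ⊥ := by simpa [compl_eq_bot] using ha
        have hb' : bᶜ ≠ ⊥ := by simpa [compl_eq_bot] using hb
        have hle := hw aᶜ bᶜ ha' hb'
        rw [if_neg (by tauto)]
        refine le_antisymm ?_ bot_le
        calc uop f g a b ≤ (f aᶜ bᶜ)ᶜ ⊓ f aᶜ bᶜ :=
              inf_le_inf le_rfl hle
          _ = ⊥ := by simp
  intro a b
  refine ⟨?_, ?_⟩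
  · rw [key, key, key]
    have hbt : (⊥ : A) ≠ ⊤ := bot_ne_top
    by_cases ha : a = ⊤ <;> by_cases hb : b = ⊤ <;> simp [ha, hb, hbt]
  · rw [key]; split <;> simp
end

section
/- Let (A,f,g) be a PS-algebra. Then (A,f,g) is a weak MIA if and only if it satisfies both the identity u(a,b) = u(a,⊥) ⊔ u(⊥,b) for all a, b, and condition (di). -/
/-- Theorem: a PS-algebra is a weak MIA iff it satisfies both the identity
`u(a,b) = u(a,⊥) ⊔ u(⊥,b)` and condition (di). -/
theorem wMIA_iff_u_additive_and_di {A : Type*} [BooleanAlgebra A] [Nontrivial A]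
    (f g : A → A → A) (hf : IsPossibilityOp f) (hg : IsSufficiencyOp g) :
    (∀ a b : A, a ≠ ⊥ → b ≠ ⊥ → g a b ≤ f a b) ↔
      ((∀ a b : A, uop f g a b = uop f g a ⊥ ⊔ uop f g ⊥ b) ∧
       (∀ a b : A, a ⊓ b ≠ ⊥ → g a b ≤ f a b)) := by
  obtain ⟨hf1, hf2, hf3, hf4⟩ := hf
  obtain ⟨hg1, hg2, hg3, hg4⟩ := hg
  have key : ∀ x y : A, uop f g x y = ⊥ ↔ g xᶜ yᶜ ≤ f xᶜ yᶜ := by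
    intro x y
    rw [uop, fdual, gstar, inf_comm, ← sdiff_eq, sdiff_eq_bot_iff]
  constructor
  · intro h
    constructor
    · intro a b
      by_cases ha : a = ⊤
      · subst ha; simp [uop, fdual, gstar, hf2, hg2]
      by_cases hb : b = ⊤
      · subst hb; simp [uop, fdual, gstar, hf1, hg1]
      have h1 : uop f g a b = ⊥ :=
        (key a b).mpr (h aᶜ bᶜ (by simpa using ha) (by simpa using hb))
      have h2 : uop f g a ⊥ = ⊥ :=
        (key a ⊥).mpr (h aᶜ ⊥ᶜ (by simpa using ha) (by simp))
      have h3 : uop f g ⊥ b = ⊥ :=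
        (key ⊥ b).mpr (h ⊥ᶜ bᶜ (by simp) (by simpa using hb))
      rw [h1, h2, h3, sup_idem]
    · intro a b hab
      exact h a b (fun h' => hab (by simp [h'])) (fun h' => hab (by simp [h']))
  · rintro ⟨hu, hdi⟩ a b ha hb
    have k := key aᶜ bᶜ
    rw [compl_compl, compl_compl] at k
    rw [← k, hu]
    have h2 : uop f g aᶜ ⊥ = ⊥ := by
      rw [key]
      rw [compl_compl, compl_bot]
      exact hdi a ⊤ (by simpa using ha)
    have h3 : uop f g ⊥ bᶜ = ⊥ := by
      rw [key]
      rw [compl_compl, compl_bot]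
      exact hdi ⊤ b (by simpa using hb)
    rw [h2, h3, sup_idem]
end

section
/- Let (A,f,g) be a PS-algebra satisfying u(a,⊥) ≤ u(u(a,⊥),⊥) and u(a,a) = u(a,⊥) = u(⊥,a) for all a. Then for every a ∈ A, the principal filter ↑u(a,⊥) = {x ∈ A : u(a,⊥) ≤ x} is a congruence filter on (A,f,g). -/
section Aux

variable {A : Type*} [BooleanAlgebra A] {f g : A → A → A}

lemma fdual_inf_right (hf : IsPossibilityOp f) (a b b' : A) :
    fdual f a b ⊓ fdual f a b' = fdual f a (b ⊓ b') := by
  simp only [fdual, ← compl_sup, hf.2.2.1, compl_inf]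

lemma fdual_inf_left (hf : IsPossibilityOp f) (a a' b : A) :
    fdual f a b ⊓ fdual f a' b = fdual f (a ⊓ a') b := by
  simp only [fdual, ← compl_sup, hf.2.2.2, compl_inf]

lemma gstar_inf_right (hg : IsSufficiencyOp g) (a b b' : A) :
    gstar g a b ⊓ gstar g a b' = gstar g a (b ⊓ b') := by
  simp only [gstar, hg.2.2.1, compl_inf]

lemma gstar_inf_left (hg : IsSufficiencyOp g) (a a' b : A) :
    gstar g a b ⊓ gstar g a' b = gstar g (a ⊓ a') b := by
  simp only [gstar, hg.2.2.2, compl_inf]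

lemma mono_of_inf {h : A → A → A}
    (hl : ∀ a a' b, h a b ⊓ h a' b = h (a ⊓ a') b)
    (hr : ∀ a b b', h a b ⊓ h a b' = h a (b ⊓ b')) :
    ∀ {a a' b b' : A}, a ≤ a' → b ≤ b' → h a b ≤ h a' b' := by
  intro a a' b b' ha hb
  have h1 : h a b ≤ h a' b := by
    calc h a b = h (a ⊓ a') b := by rw [inf_eq_left.mpr ha]
    _ = h a b ⊓ h a' b := (hl a a' b).symm
    _ ≤ h a' b := inf_le_right
  calc h a b ≤ h a' b := h1
  _ = h a' (b ⊓ b') := by rw [inf_eq_left.mpr hb]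
  _ = h a' b ⊓ h a' b' := (hr a' b b').symm
  _ ≤ h a' b' := inf_le_right

lemma fdual_mono (hf : IsPossibilityOp f) {a a' b b' : A} (ha : a ≤ a') (hb : b ≤ b') :
    fdual f a b ≤ fdual f a' b' :=
  mono_of_inf (fdual_inf_left hf) (fdual_inf_right hf) ha hb

lemma gstar_mono (hg : IsSufficiencyOp g) {a a' b b' : A} (ha : a ≤ a') (hb : b ≤ b') :
    gstar g a b ≤ gstar g a' b' :=
  mono_of_inf (gstar_inf_left hg) (gstar_inf_right hg) ha hb

lemma uop_mono (hf : IsPossibilityOp f) (hg : IsSufficiencyOp g)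
    {a a' b b' : A} (ha : a ≤ a') (hb : b ≤ b') :
    uop f g a b ≤ uop f g a' b' :=
  inf_le_inf (fdual_mono hf ha hb) (gstar_mono hg ha hb)

lemma inf_nabla_le (x x' : A) : x ⊓ nabla x x' ≤ x' := by
  rw [nabla, inf_sup_left]
  refine sup_le (inf_le_right.trans inf_le_right) ?_
  rw [← inf_assoc, inf_comm x xᶜ, compl_inf_eq_bot, bot_inf_eq]
  exact bot_le

lemma nabla_comm (x x' : A) : nabla x x' = nabla x' x := by
  rw [nabla, nabla, inf_comm, inf_comm xᶜ]

lemma le_nabla_of {c p q : A} (h1 : c ⊓ p ≤ q) (h2 : c ⊓ q ≤ p) : c ≤ nabla p q := by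
  have h3 : c ⊓ pᶜ ≤ qᶜ := by
    rw [le_compl_iff_disjoint_right, disjoint_iff_inf_le]
    calc c ⊓ pᶜ ⊓ q = (c ⊓ q) ⊓ pᶜ := by rw [inf_assoc, inf_comm pᶜ q, ← inf_assoc]
    _ ≤ p ⊓ pᶜ := inf_le_inf_right pᶜ h2
    _ = ⊥ := inf_compl_eq_bot
  calc c = (c ⊓ p) ⊔ (c ⊓ pᶜ) := by rw [← inf_sup_left, sup_compl_eq_top, inf_top_eq]
  _ ≤ p ⊓ q ⊔ pᶜ ⊓ qᶜ :=
      sup_le_sup (le_inf inf_le_right h1) (le_inf inf_le_right h3)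

end Aux

/-- Theorem: in a PS-algebra satisfying (4.2) and (4.4), each principal filter
`↑u(a,⊥)` is a congruence filter. -/
theorem principal_u_filter_is_congruence {A : Type*} [BooleanAlgebra A] [Nontrivial A]
    (f g : A → A → A) (hf : IsPossibilityOp f) (hg : IsSufficiencyOp g)
    (h42 : ∀ a : A, uop f g a ⊥ ≤ uop f g (uop f g a ⊥) ⊥)
    (h44 : ∀ a : A, uop f g a a = uop f g a ⊥ ∧ uop f g a ⊥ = uop f g ⊥ a) :
    ∀ a : A, IsCongruenceFilter f g {x : A | uop f g a ⊥ ≤ x} := by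
  intro a
  set c := uop f g a ⊥ with hc
  -- key closure facts
  have hcc : c ≤ uop f g c ⊥ := h42 a
  have hleft : ∀ x : A, c ≤ uop f g x c := by
    intro x
    calc c ≤ uop f g c ⊥ := hcc
    _ = uop f g ⊥ c := (h44 c).2
    _ ≤ uop f g x c := uop_mono hf hg bot_le le_rfl
  have hright : ∀ y : A, c ≤ uop f g c y := by
    intro y
    exact hcc.trans (uop_mono hf hg le_rfl bot_le)
  -- core estimate for a binary box
  have key : ∀ (h : A → A → A),
      (∀ a a' b, h a b ⊓ h a' b = h (a ⊓ a') b) →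
      (∀ a b b', h a b ⊓ h a b' = h a (b ⊓ b')) →
      (∀ p q, uop f g p q ≤ h p q) →
      ∀ x x' y y', c ≤ nabla x x' → c ≤ nabla y y' →
        c ⊓ h x y ≤ h x' y' := by
    intro h hl hr hu x x' y y' hx hy
    have hx' : x ⊓ c ≤ x' := by
      calc x ⊓ c ≤ x ⊓ nabla x x' := inf_le_inf_left x hx
      _ ≤ x' := inf_nabla_le x x'
    have hy' : y ⊓ c ≤ y' := by
      calc y ⊓ c ≤ y ⊓ nabla y y' := inf_le_inf_left y hy
      _ ≤ y' := inf_nabla_le y y'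
    have expand : h (x ⊓ c) (y ⊓ c) = h x y ⊓ h x c ⊓ (h c y ⊓ h c c) := by
      rw [← hl x c (y ⊓ c), ← hr x y c, ← hr c y c]
    calc c ⊓ h x y ≤ (h x y ⊓ h x c) ⊓ (h c y ⊓ h c c) := by
          refine le_inf (le_inf inf_le_right ?_) (le_inf ?_ ?_)
          · exact inf_le_left.trans ((hleft x).trans (hu x c))
          · exact inf_le_left.trans ((hright y).trans (hu c y))
          · exact inf_le_left.trans ((hright c).trans (hu c c))
    _ = h (x ⊓ c) (y ⊓ c) := expand.symm
    _ ≤ h x' y' := mono_of_inf hl hr hx' hy'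
  constructor
  · refine ⟨⟨c, le_rfl⟩, ?_, ?_⟩
    · intro p hp q hpq; exact le_trans hp hpq
    · intro p hp q hq; exact le_inf hp hq
  · intro x x' y y' hx hy
    simp only [theta, Set.mem_setOf_eq] at hx hy ⊢
    have hx2 : c ≤ nabla x' x := by rwa [nabla_comm]
    have hy2 : c ≤ nabla y' y := by rwa [nabla_comm]
    constructor
    · exact le_nabla_of
        (key (fdual f) (fdual_inf_left hf) (fdual_inf_right hf) (fun p q => inf_le_left)
          x x' y y' hx hy)
        (key (fdual f) (fdual_inf_left hf) (fdual_inf_right hf) (fun p q => inf_le_left)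
          x' x y' y hx2 hy2)
    · exact le_nabla_of
        (key (gstar g) (gstar_inf_left hg) (gstar_inf_right hg) (fun p q => inf_le_right)
          x x' y y' hx hy)
        (key (gstar g) (gstar_inf_left hg) (gstar_inf_right hg) (fun p q => inf_le_right)
          x' x y' y hx2 hy2)
end

section
/- Let (A,f,g) be a subdirectly irreducible PS-algebra satisfying the equations (4.1) u(a,⊥) ≤ a, (4.2) u(a,⊥) ≤ u(u(a,⊥),⊥), (4.3) a ≤ u(-u(-a,⊥),⊥), and (4.4) u(a,a) = u(a,⊥) = u(⊥,a). Then A is simple (its only congruence filters are {⊤} and A), and u(a,⊥) = ⊤ if a = ⊤ while u(a,⊥) = ⊥ for a ≠ ⊤ (i.e., u¹(a) := u(a,⊥) is the dual discriminator). -/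
/-- A PS-algebra is subdirectly irreducible if there is a smallest congruence filter
among those different from `{⊤}`. -/
def SubdirectlyIrreducible {A : Type*} [BooleanAlgebra A] (f g : A → A → A) : Prop :=
  ∃ F₀ : Set A, IsCongruenceFilter f g F₀ ∧ F₀ ≠ {⊤} ∧
    ∀ F : Set A, IsCongruenceFilter f g F → F ≠ {⊤} → F₀ ⊆ F

lemma fMono {A : Type*} [BooleanAlgebra A] {f : A → A → A} (hf : IsPossibilityOp f)
    {a a' b b' : A} (ha : a ≤ a') (hb : b ≤ b') : f a b ≤ f a' b' := by
  obtain ⟨-, -, h3, h4⟩ := hf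
  have h1 : f a b ≤ f a' b := by
    rw [← sup_eq_right.mpr ha, ← h4]; exact le_sup_left
  have h2 : f a' b ≤ f a' b' := by
    rw [← sup_eq_right.mpr hb, ← h3]; exact le_sup_left
  exact h1.trans h2

lemma gAnti {A : Type*} [BooleanAlgebra A] {g : A → A → A} (hg : IsSufficiencyOp g)
    {a a' b b' : A} (ha : a ≤ a') (hb : b ≤ b') : g a' b' ≤ g a b := by
  obtain ⟨-, -, h3, h4⟩ := hg
  have h1 : g a' b' ≤ g a b' := by
    rw [← sup_eq_right.mpr ha, ← h4]; exact inf_le_left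
  have h2 : g a b' ≤ g a b := by
    rw [← sup_eq_right.mpr hb, ← h3]; exact inf_le_left
  exact h1.trans h2

lemma le_nabla_iff {A : Type*} [BooleanAlgebra A] {d x y : A} :
    d ≤ nabla x y ↔ d ⊓ x = d ⊓ y := by
  unfold nabla
  constructor
  · intro h
    have key : ∀ u v : A, d ≤ u ⊓ v ⊔ uᶜ ⊓ vᶜ → d ⊓ u ≤ d ⊓ v := by
      intro u v h
      have h1 : d ⊓ u ≤ (u ⊓ v ⊔ uᶜ ⊓ vᶜ) ⊓ u := inf_le_inf_right u h
      have h2 : (u ⊓ v ⊔ uᶜ ⊓ vᶜ) ⊓ u ≤ v := by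
        rw [inf_sup_right]
        refine sup_le (le_trans inf_le_left inf_le_right) ?_
        rw [inf_assoc, inf_comm vᶜ u, ← inf_assoc, compl_inf_eq_bot]
        simp
      exact le_inf inf_le_left (h1.trans h2)
    have h' : d ≤ y ⊓ x ⊔ yᶜ ⊓ xᶜ := by rwa [inf_comm y x, inf_comm yᶜ xᶜ]
    exact le_antisymm (key x y h) (key y x h')
  · intro h
    have h1 : d ⊓ x ≤ x ⊓ y := le_inf inf_le_right (h ▸ inf_le_right : d ⊓ x ≤ y)
    have h2 : d ⊓ xᶜ ≤ xᶜ ⊓ yᶜ := by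
      refine le_inf inf_le_right ?_
      rw [le_compl_iff_disjoint_right, disjoint_iff]
      have : d ⊓ xᶜ ⊓ y = d ⊓ y ⊓ xᶜ := by ac_rfl
      rw [this, ← h, inf_assoc, inf_compl_eq_bot, inf_bot_eq]
    calc d = d ⊓ x ⊔ d ⊓ xᶜ := by rw [← inf_sup_left, sup_compl_eq_top, inf_top_eq]
      _ ≤ x ⊓ y ⊔ xᶜ ⊓ yᶜ := sup_le_sup h1 h2

lemma inf_compl_congr {A : Type*} [BooleanAlgebra A] {d x y : A} (h : d ⊓ x = d ⊓ y) :
    d ⊓ xᶜ = d ⊓ yᶜ := by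
  have e : ∀ z : A, d ⊓ zᶜ = d ⊓ (d ⊓ z)ᶜ := by
    intro z
    rw [compl_inf, inf_sup_left, inf_compl_eq_bot, bot_sup_eq]
  rw [e x, e y, h]

lemma nabla_top {A : Type*} [BooleanAlgebra A] (a : A) : nabla a ⊤ = a := by
  simp [nabla]

lemma principal_congruence {A : Type*} [BooleanAlgebra A] {f g : A → A → A}
    (hf : IsPossibilityOp f) (hg : IsSufficiencyOp g) {d : A}
    (hd1 : uop f g d ⊥ = d) (hd2 : uop f g ⊥ d = d) :
    IsCongruenceFilter f g {x | d ≤ x} := by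
  -- side conditions
  have hF1 : f dᶜ ⊤ ≤ dᶜ := by
    have : d ≤ fdual f d ⊥ := by
      have h := (inf_le_left : uop f g d ⊥ ≤ fdual f d ⊥); rwa [show fdual f d ⊥ ⊓ gstar g d ⊥ = d from hd1] at h
    rw [fdual, compl_bot] at this
    exact le_compl_comm.mp this
  have hF2 : f ⊤ dᶜ ≤ dᶜ := by
    have : d ≤ fdual f ⊥ d := by
      have h := (inf_le_left : uop f g ⊥ d ≤ fdual f ⊥ d); rwa [show fdual f ⊥ d ⊓ gstar g ⊥ d = d from hd2] at h
    rw [fdual, compl_bot] at this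
    exact le_compl_comm.mp this
  have hG1 : d ≤ g dᶜ ⊤ := by
    have : d ≤ gstar g d ⊥ := by
      have h := (inf_le_right : uop f g d ⊥ ≤ gstar g d ⊥); rwa [show fdual f d ⊥ ⊓ gstar g d ⊥ = d from hd1] at h
    rwa [gstar, compl_bot] at this
  have hG2 : d ≤ g ⊤ dᶜ := by
    have : d ≤ gstar g ⊥ d := by
      have h := (inf_le_right : uop f g ⊥ d ≤ gstar g ⊥ d); rwa [show fdual f ⊥ d ⊓ gstar g ⊥ d = d from hd2] at h
    rwa [gstar, compl_bot] at this
  have exz : ∀ z : A, z = z ⊓ d ⊔ z ⊓ dᶜ := by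
    intro z; rw [← inf_sup_left, sup_compl_eq_top, inf_top_eq]
  -- key equation for f
  have hkeyf : ∀ x y : A, d ⊓ fdual f x y = d ⊓ (f (xᶜ ⊓ d) (yᶜ ⊓ d))ᶜ := by
    intro x y
    have h3 := hf.2.2.1
    have h4 := hf.2.2.2
    have hdecomp : f xᶜ yᶜ ≤ f (xᶜ ⊓ d) (yᶜ ⊓ d) ⊔ dᶜ := by
      calc f xᶜ yᶜ = f (xᶜ ⊓ d ⊔ xᶜ ⊓ dᶜ) (yᶜ ⊓ d ⊔ yᶜ ⊓ dᶜ) := by rw [← exz, ← exz]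
        _ = f (xᶜ ⊓ d) (yᶜ ⊓ d ⊔ yᶜ ⊓ dᶜ) ⊔ f (xᶜ ⊓ dᶜ) (yᶜ ⊓ d ⊔ yᶜ ⊓ dᶜ) := (h4 ..).symm
        _ = (f (xᶜ ⊓ d) (yᶜ ⊓ d) ⊔ f (xᶜ ⊓ d) (yᶜ ⊓ dᶜ)) ⊔
            (f (xᶜ ⊓ dᶜ) (yᶜ ⊓ d) ⊔ f (xᶜ ⊓ dᶜ) (yᶜ ⊓ dᶜ)) := by rw [h3, h3]
        _ ≤ f (xᶜ ⊓ d) (yᶜ ⊓ d) ⊔ dᶜ := by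
            refine sup_le (sup_le le_sup_left ?_) (sup_le ?_ ?_) <;>
              refine le_trans ?_ le_sup_right
            · exact (fMono hf le_top inf_le_right).trans hF2
            · exact (fMono hf inf_le_right le_top).trans hF1
            · exact (fMono hf inf_le_right le_top).trans hF1
    apply le_antisymm
    · exact inf_le_inf_left d (compl_le_compl (fMono hf inf_le_left inf_le_left))
    · have h5 : (f (xᶜ ⊓ d) (yᶜ ⊓ d) ⊔ dᶜ)ᶜ ≤ (f xᶜ yᶜ)ᶜ := compl_le_compl hdecomp
      rw [compl_sup, compl_compl] at h5
      refine le_inf inf_le_left ?_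
      rw [fdual]
      exact le_trans (by rw [inf_comm]) h5
  -- key equation for g
  have hkeyg : ∀ x y : A, d ⊓ gstar g x y = d ⊓ g (xᶜ ⊓ d) (yᶜ ⊓ d) := by
    intro x y
    have h3 := hg.2.2.1
    have h4 := hg.2.2.2
    apply le_antisymm
    · exact inf_le_inf_left d (gAnti hg inf_le_left inf_le_left)
    · have hdecomp : g xᶜ yᶜ = (g (xᶜ ⊓ d) (yᶜ ⊓ d) ⊓ g (xᶜ ⊓ d) (yᶜ ⊓ dᶜ)) ⊓
          (g (xᶜ ⊓ dᶜ) (yᶜ ⊓ d) ⊓ g (xᶜ ⊓ dᶜ) (yᶜ ⊓ dᶜ)) := by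
        rw [h3, h3, h4, ← exz, ← exz]
      refine le_inf inf_le_left ?_
      rw [gstar, hdecomp]
      refine le_inf (le_inf inf_le_right ?_) (le_inf ?_ ?_) <;>
        refine le_trans inf_le_left ?_
      · exact hG2.trans (gAnti hg le_top inf_le_right)
      · exact hG1.trans (gAnti hg inf_le_right le_top)
      · exact hG1.trans (gAnti hg inf_le_right le_top)
  refine ⟨⟨⟨d, le_rfl⟩, fun a ha b hab => le_trans ha hab, fun a ha b hb => le_inf ha hb⟩, ?_⟩
  intro x x' y y' hx hy
  have hx' : d ⊓ x = d ⊓ x' := le_nabla_iff.mp hx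
  have hy' : d ⊓ y = d ⊓ y' := le_nabla_iff.mp hy
  have ex : xᶜ ⊓ d = x'ᶜ ⊓ d := by
    rw [inf_comm, inf_comm x'ᶜ d]; exact inf_compl_congr hx'
  have ey : yᶜ ⊓ d = y'ᶜ ⊓ d := by
    rw [inf_comm, inf_comm y'ᶜ d]; exact inf_compl_congr hy'
  constructor
  · show d ≤ nabla _ _
    rw [le_nabla_iff, hkeyf, hkeyf, ex, ey]
  · show d ≤ nabla _ _
    rw [le_nabla_iff, hkeyg, hkeyg, ex, ey]

/-- Theorem: a subdirectly irreducible PS-algebra satisfying (4.1)–(4.4) is simple,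
and `u¹(a) = u(a,⊥)` is the dual discriminator. -/
theorem si_implies_simple_and_dual_discriminator {A : Type*} [BooleanAlgebra A] [Nontrivial A]
    (f g : A → A → A) (hf : IsPossibilityOp f) (hg : IsSufficiencyOp g)
    (h41 : ∀ a : A, uop f g a ⊥ ≤ a)
    (h42 : ∀ a : A, uop f g a ⊥ ≤ uop f g (uop f g a ⊥) ⊥)
    (h43 : ∀ a : A, a ≤ uop f g (uop f g aᶜ ⊥)ᶜ ⊥)
    (h44 : ∀ a : A, uop f g a a = uop f g a ⊥ ∧ uop f g a ⊥ = uop f g ⊥ a)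
    (hsi : SubdirectlyIrreducible f g) :
    (∀ F : Set A, IsCongruenceFilter f g F → F = {⊤} ∨ F = Set.univ) ∧
    (∀ a : A, (a = ⊤ → uop f g a ⊥ = ⊤) ∧ (a ≠ ⊤ → uop f g a ⊥ = ⊥)) := by
  obtain ⟨F₀, hF₀c, hF₀ne, hF₀min⟩ := hsi
  -- u¹⊤ = ⊤
  have e1 : fdual f (⊤ : A) ⊥ = ⊤ := by
    rw [fdual, compl_top, compl_bot, hf.2.1, compl_bot]
  have e2 : gstar g (⊤ : A) ⊥ = ⊤ := by
    rw [gstar, compl_top, compl_bot, hg.2.1]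
  have hboxtop : uop f g (⊤ : A) ⊥ = ⊤ := by
    rw [uop, e1, e2, inf_top_eq]
  -- part 2: dual discriminator on non-top elements
  have hdd : ∀ a : A, a ≠ ⊤ → uop f g a ⊥ = ⊥ := by
    intro a ha
    by_contra hne
    set d := uop f g a ⊥ with hddef
    have hle : d ≤ a := h41 a
    have hdtop : d ≠ ⊤ := fun h => ha (top_le_iff.mp (h ▸ hle))
    have hopen : uop f g d ⊥ = d := le_antisymm (h41 d) (h42 a)
    have hopen2 : uop f g ⊥ d = d := by rw [← (h44 d).2, hopen]
    have hcopen : uop f g dᶜ ⊥ = dᶜ := by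
      apply le_antisymm (h41 _)
      have h := h43 dᶜ
      rwa [compl_compl, hopen] at h
    have hcopen2 : uop f g ⊥ dᶜ = dᶜ := by rw [← (h44 dᶜ).2, hcopen]
    have hFd := principal_congruence hf hg hopen hopen2
    have hFdc := principal_congruence hf hg hcopen hcopen2
    have hne1 : ({x | d ≤ x} : Set A) ≠ {⊤} := by
      intro h
      exact hdtop (by simpa using (h ▸ (le_rfl : d ∈ {x | d ≤ x}) : d ∈ ({⊤} : Set A)))
    have hne2 : ({x | dᶜ ≤ x} : Set A) ≠ {⊤} := by
      intro h
      have : dᶜ = ⊤ := by simpa using (h ▸ (le_rfl : dᶜ ∈ {x | dᶜ ≤ x}) : dᶜ ∈ ({⊤} : Set A))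
      exact hne (compl_eq_top.mp this)
    have h1 := hF₀min _ hFd hne1
    have h2 := hF₀min _ hFdc hne2
    apply hF₀ne
    have htopF : (⊤ : A) ∈ F₀ := by
      obtain ⟨x, hx⟩ := hF₀c.1.1
      exact hF₀c.1.2.1 x hx ⊤ le_top
    ext x
    simp only [Set.mem_singleton_iff]
    constructor
    · intro hx
      have hd1 : d ≤ x := h1 hx
      have hd2 : dᶜ ≤ x := h2 hx
      exact top_le_iff.mp (by rw [← sup_compl_eq_top (x := d)]; exact sup_le hd1 hd2)
    · rintro rfl; exact htopF
  -- congruence filters are closed under u¹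
  have hcf_box : ∀ F : Set A, IsCongruenceFilter f g F → ∀ a ∈ F, uop f g a ⊥ ∈ F := by
    rintro F ⟨⟨hFne, hup, hmeet⟩, hcompat⟩ a haF
    have htop : (⊤ : A) ∈ F := by
      obtain ⟨x, hx⟩ := hFne
      exact hup x hx ⊤ le_top
    have h1 : theta F a ⊤ := by
      show nabla a ⊤ ∈ F
      rwa [nabla_top]
    have h2 : theta F ⊥ ⊥ := by
      show nabla ⊥ ⊥ ∈ F
      simpa [nabla] using htop
    obtain ⟨hfth, hgth⟩ := hcompat a ⊤ ⊥ ⊥ h1 h2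
    rw [theta, e1, nabla_top] at hfth
    rw [theta, e2, nabla_top] at hgth
    exact hmeet _ hfth _ hgth
  refine ⟨?_, fun a => ⟨fun h => h ▸ hboxtop, hdd a⟩⟩
  intro F hF
  by_cases hFt : F = {⊤}
  · exact Or.inl hFt
  · right
    have htop : (⊤ : A) ∈ F := by
      obtain ⟨x, hx⟩ := hF.1.1
      exact hF.1.2.1 x hx ⊤ le_top
    obtain ⟨a, haF, hane⟩ : ∃ a ∈ F, a ≠ ⊤ := by
      by_contra h
      push_neg at h
      apply hFt
      ext x
      simp only [Set.mem_singleton_iff]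
      exact ⟨fun hx => h x hx, fun hx => hx ▸ htop⟩
    have hbot : (⊥ : A) ∈ F := by
      have h := hcf_box F hF a haF
      rwa [hdd a hane] at h
    exact Set.eq_univ_iff_forall.mpr fun x => hF.1.2.1 ⊥ hbot x bot_le
end

section
/- Every weak MIA is embeddable into the complex algebra of a 3-frame: if (A,f,g) is a weak MIA, then there exist a set W, a ternary relation R on W, and a map s : A → 𝒫(W) such that s is injective, s(⊥) = ∅, s(⊤) = W, s(a ⊓ b) = s(a) ∩ s(b), s(a ⊔ b) = s(a) ∪ s(b), s(-a) = W ∖ s(a), and for all a,b: s(f(a,b)) = {z ∈ W : ∃ x ∈ s(a), y ∈ s(b), R(x,z,y)} and s(g(a,b)) = {z ∈ W : ∀ x ∈ s(a), y ∈ s(b), R(x,z,y)}. -/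
universe u

section UF
variable {A : Type u} [BooleanAlgebra A]

/-- Ultrafilter predicate on subsets of a Boolean algebra. -/
def IsUF (x : Set A) : Prop :=
  ⊥ ∉ x ∧ (∀ u v, u ∈ x → v ∈ x → u ⊓ v ∈ x) ∧
  (∀ u v, u ∈ x → u ≤ v → v ∈ x) ∧ (∀ u, u ∈ x ∨ uᶜ ∈ x)

/-- Ideal predicate on subsets of a Boolean algebra. -/
def IsIdl (I : Set A) : Prop :=
  ⊥ ∈ I ∧ (∀ u v, u ∈ I → v ∈ I → u ⊔ v ∈ I) ∧ (∀ u v : A, u ≤ v → v ∈ I → u ∈ I)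

lemma IsUF.top_mem {x : Set A} (hx : IsUF x) : (⊤ : A) ∈ x := by
  rcases hx.2.2.2 ⊥ with h | h
  · exact absurd h hx.1
  · simpa using h

lemma IsUF.compl_iff {x : Set A} (hx : IsUF x) (u : A) : uᶜ ∈ x ↔ u ∉ x := by
  constructor
  · intro hc hu
    exact hx.1 (by simpa using hx.2.1 u uᶜ hu hc)
  · intro hu
    rcases hx.2.2.2 u with h | h
    · exact absurd h hu
    · exact h

lemma IsUF.prime {x : Set A} (hx : IsUF x) {u v : A} (h : u ⊔ v ∈ x) :
    u ∈ x ∨ v ∈ x := by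
  by_contra hc
  push_neg at hc
  have hu := (hx.compl_iff u).mpr hc.1
  have hv := (hx.compl_iff v).mpr hc.2
  have := hx.2.1 _ _ hu hv
  rw [← compl_sup] at this
  exact ((hx.compl_iff _).mp this) h

/-- Boolean prime ideal theorem, principal-filter version: an ultrafilter
containing `a` and disjoint from the ideal `I`. -/
lemma exists_UF (a : A) (I : Set A) (hI : IsIdl I) (ha : a ∉ I) :
    ∃ x : Set A, IsUF x ∧ a ∈ x ∧ ∀ u ∈ x, u ∉ I := by
  classical
  set S : Set (Set A) := {x | a ∈ x ∧ (∀ u v, u ∈ x → v ∈ x → u ⊓ v ∈ x) ∧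
    (∀ u v, u ∈ x → u ≤ v → v ∈ x) ∧ ∀ u ∈ x, u ∉ I} with hS
  have hmemS : {v : A | a ≤ v} ∈ S := by
    refine ⟨le_refl a, ?_, ?_, ?_⟩
    · intro u v hu hv; exact le_inf hu hv
    · intro u v hu huv; exact hu.trans huv
    · intro u hu hui; exact ha (hI.2.2 a u hu hui)
  have hzorn : ∀ c ⊆ S, IsChain (· ⊆ ·) c → c.Nonempty →
      ∃ ub ∈ S, ∀ s ∈ c, s ⊆ ub := by
    intro c hcS hchain hcne
    refine ⟨⋃₀ c, ⟨?_, ?_, ?_, ?_⟩, fun s hs => Set.subset_sUnion_of_mem hs⟩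
    · obtain ⟨t, ht⟩ := hcne; exact ⟨t, ht, (hcS ht).1⟩
    · rintro u v ⟨t1, ht1, hu⟩ ⟨t2, ht2, hv⟩
      rcases hchain.total ht1 ht2 with h | h
      · exact ⟨t2, ht2, (hcS ht2).2.1 u v (h hu) hv⟩
      · exact ⟨t1, ht1, (hcS ht1).2.1 u v hu (h hv)⟩
    · rintro u v ⟨t, ht, hu⟩ huv; exact ⟨t, ht, (hcS ht).2.2.1 u v hu huv⟩
    · rintro u ⟨t, ht, hu⟩; exact (hcS ht).2.2.2 u hu
  obtain ⟨m, hm_sub, hm⟩ := zorn_subset_nonempty S hzorn _ hmemS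
  have hmS := hm.prop
  refine ⟨m, ⟨?_, hmS.2.1, hmS.2.2.1, ?_⟩, hmS.1, hmS.2.2.2⟩
  · intro hbot; exact hmS.2.2.2 ⊥ hbot hI.1
  · -- totality via maximality
    intro u
    by_contra hc
    push_neg at hc
    obtain ⟨hu, huc⟩ := hc
    -- for any w with w, extending m by w either meets I or w ∈ m
    have key : ∀ w : A, w ∉ m → ∃ v ∈ m, v ⊓ w ∈ I := by
      intro w hw
      by_contra hnk
      push_neg at hnk
      set m' : Set A := {v | ∃ t ∈ m, t ⊓ w ≤ v} with hm'
      have hm'S : m' ∈ S := by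
        refine ⟨⟨a, hmS.1, inf_le_left.trans le_rfl⟩, ?_, ?_, ?_⟩
        · rintro u' v' ⟨t1, ht1, h1⟩ ⟨t2, ht2, h2⟩
          exact ⟨t1 ⊓ t2, hmS.2.1 _ _ ht1 ht2, by
            calc t1 ⊓ t2 ⊓ w ≤ (t1 ⊓ w) ⊓ (t2 ⊓ w) := by
                  simp only [le_inf_iff]
                  exact ⟨⟨inf_le_left.trans inf_le_left, inf_le_right⟩,
                    ⟨inf_le_left.trans inf_le_right, inf_le_right⟩⟩
              _ ≤ u' ⊓ v' := inf_le_inf h1 h2⟩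
        · rintro u' v' ⟨t, ht, h1⟩ h2; exact ⟨t, ht, h1.trans h2⟩
        · rintro u' ⟨t, ht, h1⟩ hu'I
          exact hnk t ht (hI.2.2 _ _ h1 hu'I)
      have : m' = m := hm.eq_of_ge hm'S (fun v hv => ⟨v, hv, inf_le_left⟩)
      have : w ∈ m := by
        rw [← this]; exact ⟨a, hmS.1, inf_le_right⟩
      exact hw this
    obtain ⟨v1, hv1, h1⟩ := key u hu
    obtain ⟨v2, hv2, h2⟩ := key uᶜ huc
    have hv : v1 ⊓ v2 ∈ m := hmS.2.1 _ _ hv1 hv2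
    have : v1 ⊓ v2 ∈ I := by
      refine hI.2.2 _ _ ?_ (hI.2.1 _ _ h1 h2)
      have : v1 ⊓ v2 = (v1 ⊓ v2 ⊓ u) ⊔ (v1 ⊓ v2 ⊓ uᶜ) := by
        rw [← inf_sup_left]; simp
      rw [this]
      exact sup_le_sup (inf_le_inf_right u inf_le_left)
        (inf_le_inf_right uᶜ inf_le_right)
    exact hmS.2.2.2 _ hv this

end UF

/-- Theorem: every weak MIA embeds into the complex algebra of a 3-frame. -/
theorem wMIA_embeds_into_3frame {A : Type u} [BooleanAlgebra A] [Nontrivial A]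
    (f g : A → A → A) (hf : IsPossibilityOp f) (hg : IsSufficiencyOp g)
    (hw : ∀ a b : A, a ≠ ⊥ → b ≠ ⊥ → g a b ≤ f a b) :
    ∃ (W : Type u) (R : W → W → W → Prop) (s : A → Set W),
      Function.Injective s ∧ s ⊥ = ∅ ∧ s ⊤ = Set.univ ∧
      (∀ a b : A, s (a ⊓ b) = s a ∩ s b) ∧
      (∀ a b : A, s (a ⊔ b) = s a ∪ s b) ∧
      (∀ a : A, s aᶜ = Set.univ \ s a) ∧
      (∀ a b : A, s (f a b) = {z | ∃ x ∈ s a, ∃ y ∈ s b, R x z y}) ∧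
      (∀ a b : A, s (g a b) = {z | ∀ x ∈ s a, ∀ y ∈ s b, R x z y}) := by
  classical
  obtain ⟨hf1, hf2, hf3, hf4⟩ := hf
  obtain ⟨hg1, hg2, hg3, hg4⟩ := hg
  -- monotonicity of f
  have fmono : ∀ {a a' b b' : A}, a ≤ a' → b ≤ b' → f a b ≤ f a' b' := by
    intro a a' b b' h1 h2
    have e1 : f a b ≤ f a' b := by
      have := hf4 a a' b
      rw [sup_eq_right.mpr h1] at this
      exact le_sup_left.trans this.le
    have e2 : f a' b ≤ f a' b' := by
      have := hf3 a' b b'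
      rw [sup_eq_right.mpr h2] at this
      exact le_sup_left.trans this.le
    exact e1.trans e2
  -- antitonicity of g
  have ganti : ∀ {a a' b b' : A}, a ≤ a' → b ≤ b' → g a' b' ≤ g a b := by
    intro a a' b b' h1 h2
    have e1 : g a' b' ≤ g a b' := by
      have := hg4 a a' b'
      rw [sup_eq_right.mpr h1] at this
      exact this.symm.le.trans inf_le_left
    have e2 : g a b' ≤ g a b := by
      have := hg3 a b b'
      rw [sup_eq_right.mpr h2] at this
      exact this.symm.le.trans inf_le_left
    exact e1.trans e2
  -- the frame
  refine ⟨({x : Set A // IsUF x} × Bool), ?_, ?_, ?_⟩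
  · exact fun x z y =>
      (∃ a ∈ x.1.1, ∃ b ∈ y.1.1, g a b ∈ z.1.1) ∨
      (x.2 = false ∧ y.2 = false ∧ ∀ a ∈ x.1.1, ∀ b ∈ y.1.1, f a b ∈ z.1.1)
  · exact fun a => {w | a ∈ w.1.1}
  have idl_bot : IsIdl ({⊥} : Set A) := by
    refine ⟨rfl, ?_, ?_⟩
    · rintro u v rfl rfl; simp
    · rintro u v huv rfl; simpa using le_bot_iff.mp huv
  have nonbot_mem : ∀ (c : A), c ≠ ⊥ → ∃ x : Set A, IsUF x ∧ c ∈ x := by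
    intro c hc
    obtain ⟨x, hx, hcx, _⟩ := exists_UF c {⊥} idl_bot (by simpa using hc)
    exact ⟨x, hx, hcx⟩
  refine ⟨?_, ?_, ?_, ?_, ?_, ?_, ?_, ?_⟩
  · -- injective
    intro a b hab
    by_contra hne
    have key : ∀ p q : A, p ⊓ qᶜ ≠ ⊥ →
        ({w : {x : Set A // IsUF x} × Bool | p ∈ w.1.1} : Set _) ≠ {w | q ∈ w.1.1} := by
      intro p q hpq heq
      obtain ⟨x, hx, hcx⟩ := nonbot_mem _ hpq
      have hp : p ∈ x := hx.2.2.1 _ _ hcx inf_le_left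
      have hqc : qᶜ ∈ x := hx.2.2.1 _ _ hcx inf_le_right
      have hq : q ∈ x := by
        have : (⟨⟨x, hx⟩, false⟩ : {x : Set A // IsUF x} × Bool) ∈
            ({w : {x : Set A // IsUF x} × Bool | q ∈ w.1.1} : Set _) := heq ▸ hp
        exact this
      exact ((hx.compl_iff q).mp hqc) hq
    rcases (em (a ⊓ bᶜ = ⊥)) with h1 | h1
    · rcases (em (b ⊓ aᶜ = ⊥)) with h2 | h2
      · have hab' : a ≤ b := by rwa [← sdiff_eq, sdiff_eq_bot_iff] at h1
        have hba : b ≤ a := by rwa [← sdiff_eq, sdiff_eq_bot_iff] at h2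
        exact hne (le_antisymm hab' hba)
      · exact key b a h2 hab.symm
    · exact key a b h1 hab
  · -- s ⊥ = ∅
    ext w; simpa using w.1.2.1
  · -- s ⊤ = univ
    ext w; simpa using w.1.2.top_mem
  · -- inf
    intro a b; ext w
    simp only [Set.mem_setOf_eq, Set.mem_inter_iff]
    constructor
    · intro h
      exact ⟨w.1.2.2.2.1 _ _ h inf_le_left, w.1.2.2.2.1 _ _ h inf_le_right⟩
    · intro ⟨h1, h2⟩; exact w.1.2.2.1 _ _ h1 h2
  · -- sup
    intro a b; ext w
    simp only [Set.mem_setOf_eq, Set.mem_union]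
    constructor
    · intro h; exact w.1.2.prime h
    · rintro (h | h)
      · exact w.1.2.2.2.1 _ _ h le_sup_left
      · exact w.1.2.2.2.1 _ _ h le_sup_right
  · -- compl
    intro a; ext w
    simp only [Set.mem_setOf_eq, Set.mem_diff, Set.mem_univ, true_and]
    exact w.1.2.compl_iff a
  · -- f
    intro a b
    ext z
    simp only [Set.mem_setOf_eq]
    constructor
    · intro hfz
      have ha : a ≠ ⊥ := by rintro rfl; rw [hf2] at hfz; exact z.1.2.1 hfz
      have hb : b ≠ ⊥ := by rintro rfl; rw [hf1] at hfz; exact z.1.2.1 hfz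
      -- ideal I1 = {a' | f a' b ∉ z}
      have hI1 : IsIdl {a' : A | f a' b ∉ z.1.1} := by
        refine ⟨by simp [hf2, z.1.2.1], ?_, ?_⟩
        · intro u v hu hv hm
          rw [← hf4] at hm
          rcases z.1.2.prime hm with h | h
          exacts [hu h, hv h]
        · intro u v huv hv hu
          exact hv (z.1.2.2.2.1 _ _ hu (fmono huv le_rfl))
      obtain ⟨x, hx, hax, hxd⟩ := exists_UF a _ hI1 (by simpa using hfz)
      have hxf : ∀ a' ∈ x, f a' b ∈ z.1.1 := by
        intro a' ha'
        by_contra h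
        exact hxd a' ha' h
      have hI2 : IsIdl {b' : A | ∃ a' ∈ x, f a' b' ∉ z.1.1} := by
        refine ⟨⟨a, hax, by simp [hf1, z.1.2.1]⟩, ?_, ?_⟩
        · rintro u v ⟨a1, ha1, h1⟩ ⟨a2, ha2, h2⟩
          refine ⟨a1 ⊓ a2, hx.2.1 _ _ ha1 ha2, ?_⟩
          intro hm
          rw [← hf3] at hm
          rcases z.1.2.prime hm with h | h
          · exact h1 (z.1.2.2.2.1 _ _ h (fmono inf_le_left le_rfl))
          · exact h2 (z.1.2.2.2.1 _ _ h (fmono inf_le_right le_rfl))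
        · rintro u v huv ⟨a', ha', h1⟩
          exact ⟨a', ha', fun h => h1 (z.1.2.2.2.1 _ _ h (fmono le_rfl huv))⟩
      obtain ⟨y, hy, hby, hyd⟩ := exists_UF b _ hI2 (by
        rintro ⟨a', ha', h⟩
        exact h (hxf a' ha'))
      refine ⟨⟨⟨x, hx⟩, false⟩, hax, ⟨⟨y, hy⟩, false⟩, hby, Or.inr ⟨rfl, rfl, ?_⟩⟩
      intro a' ha' b' hb'
      by_contra h
      exact hyd b' hb' ⟨a', ha', h⟩
    · rintro ⟨x, hax, y, hby, (⟨a', ha', b', hb', hgz⟩ | ⟨_, _, hR⟩)⟩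
      · have haa : a ⊓ a' ∈ x.1.1 := x.1.2.2.1 _ _ hax ha'
        have hbb : b ⊓ b' ∈ y.1.1 := y.1.2.2.1 _ _ hby hb'
        have ha0 : a ⊓ a' ≠ ⊥ := fun h => x.1.2.1 (h ▸ haa)
        have hb0 : b ⊓ b' ≠ ⊥ := fun h => y.1.2.1 (h ▸ hbb)
        have : g a' b' ≤ f a b :=
          le_trans (ganti inf_le_right inf_le_right)
            (le_trans (hw _ _ ha0 hb0) (fmono inf_le_left inf_le_left))
        exact z.1.2.2.2.1 _ _ hgz this
      · exact hR a hax b hby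
  · -- g
    intro a b
    ext z
    simp only [Set.mem_setOf_eq]
    constructor
    · intro hgz x hax y hby
      exact Or.inl ⟨a, hax, b, hby, hgz⟩
    · intro hall
      by_contra hgz
      have ha : a ≠ ⊥ := by rintro rfl; rw [hg2] at hgz; exact hgz z.1.2.top_mem
      have hb : b ≠ ⊥ := by rintro rfl; rw [hg1] at hgz; exact hgz z.1.2.top_mem
      have hI : IsIdl {a' : A | g a' b ∈ z.1.1} := by
        refine ⟨by simp [hg2, z.1.2.top_mem], ?_, ?_⟩
        · intro u v hu hv
          have := z.1.2.2.1 _ _ hu hv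
          rwa [hg4] at this
        · intro u v huv hv
          exact z.1.2.2.2.1 _ _ hv (ganti huv le_rfl)
      obtain ⟨x, hx, hax, hxd⟩ := exists_UF a _ hI hgz
      have hJ : IsIdl {b' : A | ∃ a' ∈ x, g a' b' ∈ z.1.1} := by
        refine ⟨⟨a, hax, by simp [hg1, z.1.2.top_mem]⟩, ?_, ?_⟩
        · rintro u v ⟨a1, ha1, h1⟩ ⟨a2, ha2, h2⟩
          refine ⟨a1 ⊓ a2, hx.2.1 _ _ ha1 ha2, ?_⟩
          have h1' : g (a1 ⊓ a2) u ∈ z.1.1 :=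
            z.1.2.2.2.1 _ _ h1 (ganti inf_le_left le_rfl)
          have h2' : g (a1 ⊓ a2) v ∈ z.1.1 :=
            z.1.2.2.2.1 _ _ h2 (ganti inf_le_right le_rfl)
          have := z.1.2.2.1 _ _ h1' h2'
          rwa [hg3] at this
        · rintro u v huv ⟨a', ha', h1⟩
          exact ⟨a', ha', z.1.2.2.2.1 _ _ h1 (ganti le_rfl huv)⟩
      obtain ⟨y, hy, hby, hyd⟩ := exists_UF b _ hJ (by
        rintro ⟨a', ha', hgab⟩
        exact hxd a' ha' hgab)
      have := hall ⟨⟨x, hx⟩, false⟩ hax ⟨⟨y, hy⟩, true⟩ hby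
      rcases this with ⟨a', ha', b', hb', hgz'⟩ | ⟨_, hfalse, _⟩
      · exact hyd b' hb' ⟨a', ha', hgz'⟩
      · exact Bool.noConfusion hfalse
end

section
/- Every betweenness algebra is embeddable into the complex algebra of a 3-frame whose relation satisfies axiom (BT1): if (A,f,g) is a b-algebra, then there exist a set W, a ternary relation R on W satisfying R(x,y,z) → R(z,y,x) for all x,y,z ∈ W, and a map s : A → 𝒫(W) such that s is injective, s(⊥) = ∅, s(⊤) = W, s(a ⊓ b) = s(a) ∩ s(b), s(a ⊔ b) = s(a) ∪ s(b), s(-a) = W ∖ s(a), and for all a,b: s(f(a,b)) = {z ∈ W : ∃ x ∈ s(a), y ∈ s(b), R(x,z,y)} and s(g(a,b)) = {z ∈ W : ∀ x ∈ s(a), y ∈ s(b), R(x,z,y)}. -/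
universe u

open Order Ideal

namespace Order.Ideal.PrimePair

section Preorder

variable {α : Type*} [Preorder α] (P : PrimePair α) {a : α}

theorem mem_F_iff_notMem_I : a ∈ P.F ↔ a ∉ P.I := by
  rw [← SetLike.mem_coe, ← P.compl_I_eq_F, Set.mem_compl_iff, SetLike.mem_coe]

theorem bot_notMem_F [OrderBot α] : ⊥ ∉ P.F :=
  (P.mem_F_iff_notMem_I).not_left.2 P.I.bot_mem

theorem ne_bot_of_mem_F [OrderBot α] (ha : a ∈ P.F) : a ≠ ⊥ :=
  ne_of_mem_of_not_mem ha P.bot_notMem_F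

end Preorder

theorem sup_mem_F_iff {α : Type*} [SemilatticeSup α] (P : PrimePair α) {a b : α} :
    a ⊔ b ∈ P.F ↔ a ∈ P.F ∨ b ∈ P.F := by
  simp only [mem_F_iff_notMem_I, sup_mem_iff, not_and_or]

theorem compl_mem_F_iff {α : Type*} [BooleanAlgebra α] (P : PrimePair α) {a : α} :
    aᶜ ∈ P.F ↔ a ∉ P.F := by
  rw [mem_F_iff_notMem_I, mem_F_iff_notMem_I, not_not]
  exact ⟨fun h => compl_compl a ▸ P.I_isPrime.compl_mem_of_notMem h,
    fun h => P.I_isProper.notMem_of_compl_mem ((compl_compl a).symm ▸ h)⟩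

section DistribLattice

variable {α : Type*} [DistribLattice α]

theorem exists_le_I_of_notMem {I : Ideal α} {a : α} (ha : a ∉ I) :
    ∃ P : PrimePair α, I ≤ P.I ∧ a ∈ P.F := by
  have hdisj : Disjoint (PFilter.principal a : Set α) I :=
    Set.disjoint_left.2 fun c hac hc => ha (I.lower hac hc)
  obtain ⟨J, hJ, hIJ, hJa⟩ := DistribLattice.prime_ideal_of_disjoint_filter_ideal hdisj
  exact ⟨hJ.toPrimePair, hIJ, Set.disjoint_left.1 hJa (PFilter.mem_principal.2 le_rfl)⟩

theorem le_of_forall_mem_F {a b : α} (h : ∀ P : PrimePair α, a ∈ P.F → b ∈ P.F) : a ≤ b := by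
  by_contra hab
  obtain ⟨P, hbP, haP⟩ := exists_le_I_of_notMem (mt mem_principal.1 hab)
  exact (P.mem_F_iff_notMem_I.1 (h P haP)) (hbP mem_principal_self)

end DistribLattice

end Order.Ideal.PrimePair

namespace IsPossibilityOp

variable {A : Type*} [BooleanAlgebra A] {f : A → A → A}

theorem flip (hf : IsPossibilityOp f) : IsPossibilityOp (flip f) :=
  ⟨hf.2.1, hf.1, fun a b b' => hf.2.2.2 b b' a, fun a a' b => hf.2.2.1 b a a'⟩

theorem mono_left (hf : IsPossibilityOp f) {a a' : A} (h : a ≤ a') (b : A) :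
    f a b ≤ f a' b := by
  rw [← sup_eq_right.2 h, ← hf.2.2.2]
  exact le_sup_left

theorem mono_right (hf : IsPossibilityOp f) (a : A) {b b' : A} (h : b ≤ b') :
    f a b ≤ f a b' :=
  hf.flip.mono_left h a

theorem exists_primePair_left (hf : IsPossibilityOp f) (z : PrimePair A) (G : PFilter A)
    {a : A} (ha : ∀ d ∈ G, f a d ∈ z.F) :
    ∃ x : PrimePair A, a ∈ x.F ∧ ∀ c ∈ x.F, ∀ d ∈ G, f c d ∈ z.F := by
  let I : Ideal A :=
    { carrier := {c | ∃ d ∈ G, f c d ∈ z.I}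
      lower' := fun c c' hc ⟨d, hd, hcd⟩ => ⟨d, hd, z.I.lower (hf.mono_left hc d) hcd⟩
      nonempty' := ⟨⊥, ⊤, PFilter.top_mem, (hf.2.1 ⊤).symm ▸ z.I.bot_mem⟩
      directed' := SupClosed.directedOn fun c ⟨d, hd, hcd⟩ c' ⟨d', hd', hcd'⟩ =>
        ⟨d ⊓ d', PFilter.inf_mem hd hd', by
          rw [← hf.2.2.2]
          exact sup_mem (z.I.lower (hf.mono_right c inf_le_left) hcd)
            (z.I.lower (hf.mono_right c' inf_le_right) hcd')⟩ }
  have haI : a ∉ I := fun ⟨d, hd, had⟩ => (z.mem_F_iff_notMem_I.1 (ha d hd)) had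
  obtain ⟨x, hIx, hax⟩ := PrimePair.exists_le_I_of_notMem haI
  refine ⟨x, hax, fun c hc d hd => z.mem_F_iff_notMem_I.2 fun hcd => ?_⟩
  exact x.mem_F_iff_notMem_I.1 hc (hIx ⟨d, hd, hcd⟩)

theorem exists_primePairs (hf : IsPossibilityOp f) {z : PrimePair A} {a b : A}
    (hab : f a b ∈ z.F) :
    ∃ x y : PrimePair A, a ∈ x.F ∧ b ∈ y.F ∧ ∀ c ∈ x.F, ∀ d ∈ y.F, f c d ∈ z.F := by
  obtain ⟨x, hax, hx⟩ := hf.exists_primePair_left z (PFilter.principal b)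
    fun d hd => z.F.mem_of_le (hf.mono_right a hd) hab
  obtain ⟨y, hby, hy⟩ := hf.flip.exists_primePair_left z x.F
    fun c hc => hx c hc b (PFilter.mem_principal.2 le_rfl)
  exact ⟨x, y, hax, hby, fun c hc d hd => hy d hd c hc⟩

end IsPossibilityOp

namespace IsSufficiencyOp

variable {A : Type*} [BooleanAlgebra A] {g : A → A → A}

theorem compl (hg : IsSufficiencyOp g) : IsPossibilityOp fun a b => (g a b)ᶜ := by
  refine ⟨fun a => ?_, fun a => ?_, fun a b b' => ?_, fun a a' b => ?_⟩ <;> dsimp only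
  · rw [hg.1, compl_top]
  · rw [hg.2.1, compl_top]
  · rw [← hg.2.2.1, compl_inf]
  · rw [← hg.2.2.2, compl_inf]

theorem anti_left (hg : IsSufficiencyOp g) {a a' : A} (h : a ≤ a') (b : A) :
    g a' b ≤ g a b :=
  compl_le_compl_iff_le.1 (hg.compl.mono_left h b)

theorem anti_right (hg : IsSufficiencyOp g) (a : A) {b b' : A} (h : b ≤ b') :
    g a b' ≤ g a b :=
  compl_le_compl_iff_le.1 (hg.compl.mono_right a h)

theorem exists_primePairs (hg : IsSufficiencyOp g) {z : PrimePair A} {a b : A}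
    (hab : g a b ∉ z.F) :
    ∃ x y : PrimePair A, a ∈ x.F ∧ b ∈ y.F ∧ ∀ c ∈ x.F, ∀ d ∈ y.F, g c d ∉ z.F := by
  simp only [← z.compl_mem_F_iff] at hab ⊢
  exact hg.compl.exists_primePairs hab

end IsSufficiencyOp

section CanonicalFrame

variable {A : Type*} [BooleanAlgebra A] {f g : A → A → A}

theorem sufficiency_le_possibility (hf : IsPossibilityOp f) (hg : IsSufficiencyOp g)
    (hw : ∀ a b : A, a ≠ ⊥ → b ≠ ⊥ → g a b ≤ f a b) {a b c d : A}
    (hac : a ⊓ c ≠ ⊥) (hbd : b ⊓ d ≠ ⊥) : g c d ≤ f a b :=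
  calc g c d ≤ g (a ⊓ c) (b ⊓ d) :=
        (hg.anti_left inf_le_right d).trans (hg.anti_right _ inf_le_right)
    _ ≤ f (a ⊓ c) (b ⊓ d) := hw _ _ hac hbd
    _ ≤ f a b := (hf.mono_left inf_le_left _).trans (hf.mono_right a inf_le_left)

def canonicalRel (f g : A → A → A) (x z y : PrimePair A × Bool) : Prop :=
  (∃ c ∈ x.1.F, ∃ d ∈ y.1.F, g c d ∈ z.1.F) ∨
    ((∀ c ∈ x.1.F, ∀ d ∈ y.1.F, f c d ∈ z.1.F) ∧ x.2 = z.2 ∧ y.2 = z.2)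

theorem canonicalRel_symm (hf : ∀ a b : A, f a b ≤ f b a) (hg : ∀ a b : A, g a b ≤ g b a)
    {x z y : PrimePair A × Bool} : canonicalRel f g x z y → canonicalRel f g y z x
  | .inl ⟨c, hc, d, hd, hcd⟩ => .inl ⟨d, hd, c, hc, z.1.F.mem_of_le (hg c d) hcd⟩
  | .inr ⟨hxy, hxz, hyz⟩ =>
    .inr ⟨fun d hd c hc => z.1.F.mem_of_le (hf c d) (hxy c hc d hd), hyz, hxz⟩

theorem possibility_mem_F_iff (hf : IsPossibilityOp f) (hg : IsSufficiencyOp g)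
    (hw : ∀ a b : A, a ≠ ⊥ → b ≠ ⊥ → g a b ≤ f a b) (z : PrimePair A × Bool) (a b : A) :
    f a b ∈ z.1.F ↔ ∃ x, a ∈ x.1.F ∧ ∃ y, b ∈ y.1.F ∧ canonicalRel f g x z y := by
  constructor
  · intro hab
    obtain ⟨x, y, hax, hby, hxy⟩ := hf.exists_primePairs hab
    exact ⟨(x, z.2), hax, (y, z.2), hby, .inr ⟨hxy, rfl, rfl⟩⟩
  · rintro ⟨x, hax, y, hby, ⟨c, hc, d, hd, hcd⟩ | ⟨hxy, -⟩⟩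
    · have hac := x.1.ne_bot_of_mem_F (PFilter.inf_mem hax hc)
      have hbd := y.1.ne_bot_of_mem_F (PFilter.inf_mem hby hd)
      exact z.1.F.mem_of_le (sufficiency_le_possibility hf hg hw hac hbd) hcd
    · exact hxy a hax b hby

theorem sufficiency_mem_F_iff (hg : IsSufficiencyOp g) (z : PrimePair A × Bool) (a b : A) :
    g a b ∈ z.1.F ↔ ∀ x, a ∈ x.1.F → ∀ y, b ∈ y.1.F → canonicalRel f g x z y := by
  refine ⟨fun hab x hax y hby => .inl ⟨a, hax, b, hby, hab⟩, fun hR => ?_⟩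
  by_contra hab
  obtain ⟨x, y, hax, hby, hxy⟩ := hg.exists_primePairs hab
  rcases hR (x, !z.2) hax (y, !z.2) hby with ⟨c, hc, d, hd, hcd⟩ | ⟨-, hxz, -⟩
  · exact hxy c hc d hd hcd
  · exact Bool.not_ne_self z.2 hxz

end CanonicalFrame

theorem b_algebra_embeds_into_3frame_general {A : Type u} [BooleanAlgebra A]
    (f g : A → A → A) (hf : IsPossibilityOp f) (hg : IsSufficiencyOp g)
    (hw : ∀ a b : A, a ≠ ⊥ → b ≠ ⊥ → g a b ≤ f a b)
    (habt1f : ∀ x y : A, f x y ≤ f y x)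
    (habt1g : ∀ x y : A, g x y ≤ g y x) :
    ∃ (W : Type u) (R : W → W → W → Prop) (s : A → Set W),
      (∀ x y z : W, R x y z → R z y x) ∧
      Function.Injective s ∧ s ⊥ = ∅ ∧ s ⊤ = Set.univ ∧
      (∀ a b : A, s (a ⊓ b) = s a ∩ s b) ∧
      (∀ a b : A, s (a ⊔ b) = s a ∪ s b) ∧
      (∀ a : A, s aᶜ = Set.univ \ s a) ∧
      (∀ a b : A, s (f a b) = {z | ∃ x ∈ s a, ∃ y ∈ s b, R x z y}) ∧
      (∀ a b : A, s (g a b) = {z | ∀ x ∈ s a, ∀ y ∈ s b, R x z y}) := by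
  have hs_le {a b : A} (h : {w : PrimePair A × Bool | a ∈ w.1.F} = {w | b ∈ w.1.F}) : a ≤ b :=
    PrimePair.le_of_forall_mem_F fun P ha => (Set.ext_iff.1 h (P, true)).1 ha
  refine ⟨PrimePair A × Bool, canonicalRel f g, fun a => {w | a ∈ w.1.F},
    fun _ _ _ => canonicalRel_symm habt1f habt1g,
    fun a b h => le_antisymm (hs_le h) (hs_le h.symm),
    Set.eq_empty_iff_forall_notMem.2 fun w => w.1.bot_notMem_F,
    Set.eq_univ_iff_forall.2 fun w => PFilter.top_mem,
    fun a b => Set.ext fun w => PFilter.inf_mem_iff,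
    fun a b => Set.ext fun w => w.1.sup_mem_F_iff,
    fun a => Set.ext fun w => w.1.compl_mem_F_iff.trans (and_iff_right trivial).symm,
    fun a b => Set.ext fun z => possibility_mem_F_iff hf hg hw z a b,
    fun a b => Set.ext fun z => sufficiency_mem_F_iff hg z a b⟩

/-- Theorem: every betweenness algebra embeds into the complex algebra of a 3-frame whose
relation satisfies the symmetry axiom (BT1). -/
theorem b_algebra_embeds_into_3frame {A : Type u} [BooleanAlgebra A] [Nontrivial A]
    (f g : A → A → A) (hf : IsPossibilityOp f) (hg : IsSufficiencyOp g)
    (hw : ∀ a b : A, a ≠ ⊥ → b ≠ ⊥ → g a b ≤ f a b)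
    (habt0 : ∀ x : A, x ≤ f x x)
    (habt1f : ∀ x y : A, f x y ≤ f y x)
    (habt1g : ∀ x y : A, g x y ≤ g y x)
    (habt2 : ∀ x y z : A, y ⊓ f x z ≤ f (x ⊓ f x y) z)
    (habt3 : ∀ x y : A, f x (g x yᶜ ⊓ y) ≤ y) :
    ∃ (W : Type u) (R : W → W → W → Prop) (s : A → Set W),
      (∀ x y z : W, R x y z → R z y x) ∧
      Function.Injective s ∧ s ⊥ = ∅ ∧ s ⊤ = Set.univ ∧
      (∀ a b : A, s (a ⊓ b) = s a ∩ s b) ∧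
      (∀ a b : A, s (a ⊔ b) = s a ∪ s b) ∧
      (∀ a : A, s aᶜ = Set.univ \ s a) ∧
      (∀ a b : A, s (f a b) = {z | ∃ x ∈ s a, ∃ y ∈ s b, R x z y}) ∧
      (∀ a b : A, s (g a b) = {z | ∀ x ∈ s a, ∀ y ∈ s b, R x z y}) :=
  b_algebra_embeds_into_3frame_general f g hf hg hw habt1f habt1g
end
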